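/- Let A be a quotient of the tensor algebra T(HV₁) in which the relations x_i² = 0 (i ∈ {1,2,3}), x₁x₂ + x₃x₁ + x₂x₃ = 0, x₂x₁ + x₁x₃ + x₃x₂ = 0, u_{i1} − ω u_{1,2−i} = 0 (i ∈ {2,3}), and x₄ z_h − q₂ z_h x₄ = 0 (h ∈ {1,2,3}) hold. Then z_h² = 0 holds in A for all h ∈ {1,2,3}, where z_h = x_h x₄ − q₁ x₄ x_h. -/

import Mathlib

/-! Put `c = 1 + q₁q₂` and `z = X y − q₁ y X` with `X² = 0`. Expanding, the relation
`y z = q₂ z y` says `c • yXy = q₂ • Xy² + q₁ • y²X`. Multiplying it by `X` on the left and on the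
right (and using `X² = 0`) gives `c • XyXy = q₁ • Xy²X` and `c • yXyX = q₂ • Xy²X`, while
`z² = XyXy − q₁ • Xy²X + q₁² • yXyX`. Hence `c • z² = (q₁ − c q₁ + q₁² q₂) • Xy²X = 0`, and
`c ≠ 0` because `q₁q₂ = −ω ≠ −1`. -/

/-- `z_h = x_h x₄ − q₁ x₄ x_h` (here `y` plays the role of `x₄` and the first
three generators are indexed by `ZMod 3`, with `x₃ = x 0`, so that `x 3 = x₃`). -/
def zz {k : Type*} [Field k] {A : Type*} [Ring A] [Algebra k A]
    (q1 : k) (x : ZMod 3 → A) (y : A) (h : ZMod 3) : A :=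
  x h * y - q1 • (y * x h)

/-- `u_{ij} = (ad_c x_i) z_j = x_i z_j + q₁ z_{2i−j} x_i`. -/
def uu {k : Type*} [Field k] {A : Type*} [Ring A] [Algebra k A]
    (q1 : k) (x : ZMod 3 → A) (y : A) (i j : ZMod 3) : A :=
  x i * zz q1 x y j + q1 • (zz q1 x y (2 * i - j) * x i)

section TwistedCommutator

variable {k A : Type*} [CommRing k] [Ring A] [Algebra k A] {q1 q2 : k} {X y : A}

theorem smul_mul_mul_eq_of_mul_twistedComm
    (hz : y * (X * y - q1 • (y * X)) = q2 • ((X * y - q1 • (y * X)) * y)) :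
    (1 + q1 * q2) • (y * X * y) = q2 • (X * y * y) + q1 • (y * y * X) := by
  simp only [mul_sub, sub_mul, smul_mul_assoc, mul_smul_comm, smul_smul, smul_sub,
    mul_assoc] at hz ⊢
  linear_combination (norm := module) hz

theorem smul_twistedComm_sq_eq_zero (hX : X * X = 0)
    (hz : y * (X * y - q1 • (y * X)) = q2 • ((X * y - q1 • (y * X)) * y)) :
    (1 + q1 * q2) • (X * y - q1 • (y * X)) ^ 2 = 0 := by
  have key := smul_mul_mul_eq_of_mul_twistedComm hz
  have left : (1 + q1 * q2) • (X * y * X * y) = q1 • (X * y * y * X) := by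
    simpa only [mul_add, mul_smul_comm, ← mul_assoc, hX, zero_mul, smul_zero, zero_add]
      using congrArg (X * ·) key
  have right : (1 + q1 * q2) • (y * X * y * X) = q2 • (X * y * y * X) := by
    have := congrArg (· * X) key
    simp only [add_mul, smul_mul_assoc, mul_assoc, hX, mul_zero, smul_zero, add_zero] at this
    simpa only [mul_assoc] using this
  have hXyyX : y * X * X * y = 0 := by rw [mul_assoc y, hX, mul_zero, zero_mul]
  rw [sq]
  simp only [mul_sub, sub_mul, smul_mul_assoc, mul_smul_comm, smul_smul, smul_sub, ← mul_assoc]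
  linear_combination (norm := module) left + (q1 * q1) • right - ((1 + q1 * q2) * q1) • hXyyX

end TwistedCommutator

theorem z_squared_zero_general {k : Type*} [Field k]
    (ω q1 q2 : k) (hω1 : ω ≠ 1) (hq : q1 * q2 = -ω)
    {A : Type*} [Ring A] [Algebra k A] (x : ZMod 3 → A) (y : A)
    (hx2 : ∀ i : ZMod 3, x i ^ 2 = 0)
    (hz : ∀ h : ZMod 3, y * zz q1 x y h = q2 • (zz q1 x y h * y)) :
    ∀ h : ZMod 3, zz q1 x y h ^ 2 = 0 := by
  intro h
  have hc : (1 : k) + q1 * q2 ≠ 0 := by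
    rw [hq, ← sub_eq_add_neg, sub_ne_zero]
    exact hω1.symm
  have hX : x h * x h = 0 := by rw [← sq, hx2 h]
  exact (smul_eq_zero.mp (smul_twistedComm_sq_eq_zero hX (hz h))).resolve_left hc

/-- in any quotient `A` of `T(HV₁)` in which the relations
`x_i² = 0`, `x₁x₂ + x₃x₁ + x₂x₃ = 0`, `x₂x₁ + x₁x₃ + x₃x₂ = 0`,
`u_{i1} − ω u_{1,2−i} = 0` (i ∈ {2,3}) and `x₄ z_h − q₂ z_h x₄ = 0` hold,
one has `z_h² = 0` for all `h ∈ {1,2,3}`. -/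
theorem z_squared_zero {k : Type*} [Field k] [CharZero k]
    (ω q1 q2 : k) (hω : ω ^ 3 = 1) (hω1 : ω ≠ 1) (hq : q1 * q2 = -ω)
    {A : Type*} [Ring A] [Algebra k A] (x : ZMod 3 → A) (y : A)
    (hx2 : ∀ i : ZMod 3, x i ^ 2 = 0)
    (hs1 : x 1 * x 2 + x 3 * x 1 + x 2 * x 3 = 0)
    (hs2 : x 2 * x 1 + x 1 * x 3 + x 3 * x 2 = 0)
    (hu2 : uu q1 x y 2 1 = ω • uu q1 x y 1 3)
    (hu3 : uu q1 x y 3 1 = ω • uu q1 x y 1 2)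
    (hz : ∀ h : ZMod 3, y * zz q1 x y h = q2 • (zz q1 x y h * y)) :
    ∀ h : ZMod 3, zz q1 x y h ^ 2 = 0 :=
  z_squared_zero_general ω q1 q2 hω1 hq x y hx2 hz
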